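/- In the recursive Hanoi sequence hanoi(N, 1, 3, 2), disc d (the d-th smallest) is moved exactly 2^(N−d) times, for each 1 ≤ d ≤ N. -/
import Mathlib


/- Pegs are `Fin 3` (peg `0` = "peg 1", peg `1` = "peg 2", peg `2` = "peg 3").
Discs are `Fin N`, labelled by increasing size; a state assigns each disc to a
peg (the stacking order is determined by size in any legal state). -/

/-- A move `(i, j)` is legal in state `S` if `i ≠ j`, peg `i` is nonempty with
smallest (top) disc `d`, and `d` is smaller than every disc on peg `j`. -/
def legalMove {N : ℕ} (S : Fin N → Fin 3) (m : Fin 3 × Fin 3) : Prop :=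
  m.1 ≠ m.2 ∧ ∃ d, S d = m.1 ∧ (∀ e, S e = m.1 → d ≤ e) ∧ (∀ e, S e = m.2 → d < e)

open Classical in
/-- Executing a move transfers the smallest disc on the source peg (if any). -/
noncomputable def applyMove {N : ℕ} (S : Fin N → Fin 3) (m : Fin 3 × Fin 3) :
    Fin N → Fin 3 :=
  if h : ∃ d, S d = m.1 ∧ ∀ e, S e = m.1 → d ≤ e then
    Function.update S h.choose m.2
  else S

noncomputable def applyMoves {N : ℕ} (S : Fin N → Fin 3) :
    List (Fin 3 × Fin 3) → (Fin N → Fin 3)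
  | [] => S
  | m :: ms => applyMoves (applyMove S m) ms

/-- Every move in the list is legal in the state at which it is executed. -/
def legalSeq {N : ℕ} (S : Fin N → Fin 3) : List (Fin 3 × Fin 3) → Prop
  | [] => True
  | m :: ms => legalMove S m ∧ legalSeq (applyMove S m) ms

/-- The recursive Hanoi move sequence. -/
def hanoi : ℕ → Fin 3 → Fin 3 → Fin 3 → List (Fin 3 × Fin 3)
  | 0, _, _, _ => []
  | 1, i, j, _ => [(i, j)]
  | n + 2, i, j, k => hanoi (n + 1) i k j ++ [(i, j)] ++ hanoi (n + 1) k j i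

open Classical in
/-- The disc moved by move `m` in state `S` (the smallest disc on the source
peg), if any. -/
noncomputable def movedDisc {N : ℕ} (S : Fin N → Fin 3) (m : Fin 3 × Fin 3) :
    Option (Fin N) :=
  if h : ∃ d, S d = m.1 ∧ ∀ e, S e = m.1 → d ≤ e then some h.choose else none

/-- The list of discs moved, in order, when executing a list of moves. -/
noncomputable def trace {N : ℕ} (S : Fin N → Fin 3) :
    List (Fin 3 × Fin 3) → List (Option (Fin N))
  | [] => []
  | m :: ms => movedDisc S m :: trace (applyMove S m) ms

lemma applyMoves_append {N : ℕ} (S : Fin N → Fin 3) (l1 l2 : List (Fin 3 × Fin 3)) :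
    applyMoves S (l1 ++ l2) = applyMoves (applyMoves S l1) l2 := by
  induction l1 generalizing S with
  | nil => rfl
  | cons m ms ih => simp [applyMoves, ih]

lemma trace_append {N : ℕ} (S : Fin N → Fin 3) (l1 l2 : List (Fin 3 × Fin 3)) :
    trace S (l1 ++ l2) = trace S l1 ++ trace (applyMoves S l1) l2 := by
  induction l1 generalizing S with
  | nil => rfl
  | cons m ms ih => simp [trace, applyMoves, ih]

lemma step_eq {N : ℕ} (S : Fin N → Fin 3) (a b : Fin 3) (d : Fin N)
    (h0 : S d = a) (hmin : ∀ e, S e = a → d ≤ e) :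
    movedDisc S (a, b) = some d ∧ applyMove S (a, b) = Function.update S d b := by
  have hex : ∃ d, S d = (a, b).1 ∧ ∀ e, S e = (a, b).1 → d ≤ e := ⟨d, h0, hmin⟩
  have hc := hex.choose_spec
  have hd : hex.choose = d := le_antisymm (hc.2 d h0) (hmin _ hc.1)
  constructor
  · rw [movedDisc, dif_pos hex, hd]
  · rw [applyMove, dif_pos hex, hd]

lemma hanoi_main (n : ℕ) : ∀ {N : ℕ}, n ≤ N → ∀ (S : Fin N → Fin 3) (i j k : Fin 3),
    i ≠ j → i ≠ k → j ≠ k → (∀ e : Fin N, (e : ℕ) < n → S e = i) →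
    (∀ e : Fin N, applyMoves S (hanoi n i j k) e = if (e : ℕ) < n then j else S e) ∧
    ∀ d : Fin N, List.count (some d) (trace S (hanoi n i j k)) =
      if (d : ℕ) < n then 2 ^ (n - 1 - (d : ℕ)) else 0 := by
  induction n using Nat.strong_induction_on with
  | _ n ih =>
  match n, ih with
  | 0, _ =>
    intro N hn S i j k hij hik hjk H
    exact ⟨fun e => by simp [applyMoves, hanoi], fun d => by simp [trace, hanoi]⟩
  | 1, _ =>
    intro N hn S i j k hij hik hjk H
    have h0N : 0 < N := by omega
    have h0 : S ⟨0, h0N⟩ = i := H _ (by simp)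
    have hmin : ∀ e, S e = i → (⟨0, h0N⟩ : Fin N) ≤ e := fun e _ => by
      simp [Fin.le_def]
    obtain ⟨hm, ha⟩ := step_eq S i j ⟨0, h0N⟩ h0 hmin
    have hlist : hanoi 1 i j k = [(i, j)] := rfl
    constructor
    · intro e
      rw [hlist]
      show applyMove S (i, j) e = _
      rw [ha]
      by_cases he : (e : ℕ) < 1
      · have : e = ⟨0, h0N⟩ := by ext; simp; omega
        rw [this]; simp
      · have : e ≠ ⟨0, h0N⟩ := fun h => by rw [h] at he; simp at he
        simp [Function.update_of_ne this, he]
    · intro d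
      rw [hlist]
      show List.count (some d) [movedDisc S (i, j)] = _
      rw [hm]
      by_cases hdd : d = ⟨0, h0N⟩
      · subst hdd; simp
      · have hd1 : ¬ (d : ℕ) < 1 := by
          intro h
          exact hdd (by ext; simp; omega)
        rw [if_neg hd1]
        simp only [List.count_singleton]
        rw [if_neg (by simp; intro h; exact hdd h.symm)]
  | (m + 2), ih =>
    intro N hn S i j k hij hik hjk H
    have hmN : m + 1 < N := by omega
    obtain ⟨hS1, hc1⟩ := ih (m + 1) (by omega) (by omega) S i k j hik hij (Ne.symm hjk)
      (fun e he => H e (by omega))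
    have hS1m : applyMoves S (hanoi (m + 1) i k j) ⟨m + 1, hmN⟩ = i := by
      rw [hS1, if_neg (by simp)]
      exact H _ (by simp)
    have hS1min : ∀ e, applyMoves S (hanoi (m + 1) i k j) e = i →
        (⟨m + 1, hmN⟩ : Fin N) ≤ e := by
      intro e he
      rw [hS1] at he
      by_cases h : (e : ℕ) < m + 1
      · rw [if_pos h] at he; exact absurd he.symm hik
      · show m + 1 ≤ (e : ℕ); omega
    obtain ⟨hm2, ha2⟩ := step_eq _ i j ⟨m + 1, hmN⟩ hS1m hS1min
    have hS2 : ∀ e : Fin N, (e : ℕ) < m + 1 →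
        applyMove (applyMoves S (hanoi (m + 1) i k j)) (i, j) e = k := by
      intro e he
      have hne : e ≠ ⟨m + 1, hmN⟩ := fun h => by rw [h] at he; simp at he
      rw [ha2, Function.update_of_ne hne, hS1, if_pos he]
    obtain ⟨hS3, hc3⟩ := ih (m + 1) (by omega) (by omega) _ k j i
      (Ne.symm hjk) (Ne.symm hik) (Ne.symm hij) hS2
    have hlist : hanoi (m + 2) i j k =
        hanoi (m + 1) i k j ++ [(i, j)] ++ hanoi (m + 1) k j i := rfl
    have htr : trace S (hanoi (m + 2) i j k) =
        trace S (hanoi (m + 1) i k j) ++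
          [movedDisc (applyMoves S (hanoi (m + 1) i k j)) (i, j)] ++
          trace (applyMove (applyMoves S (hanoi (m + 1) i k j)) (i, j))
            (hanoi (m + 1) k j i) := by
      rw [hlist, trace_append, trace_append, applyMoves_append]
      rfl
    have happ : ∀ e : Fin N, applyMoves S (hanoi (m + 2) i j k) e =
        applyMoves (applyMove (applyMoves S (hanoi (m + 1) i k j)) (i, j))
          (hanoi (m + 1) k j i) e := by
      intro e
      rw [hlist, applyMoves_append, applyMoves_append]
      rfl
    constructor
    · intro e
      rw [happ e, hS3 e]
      by_cases h1 : (e : ℕ) < m + 1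
      · rw [if_pos h1, if_pos (by omega)]
      · rw [if_neg h1, ha2]
        by_cases h2 : (e : ℕ) < m + 2
        · have he : e = ⟨m + 1, hmN⟩ := by ext; simp; omega
          rw [if_pos h2, he, Function.update_self]
        · have hne : e ≠ ⟨m + 1, hmN⟩ := fun h => by rw [h] at h2; simp at h2
          rw [if_neg h2, Function.update_of_ne hne, hS1, if_neg (by omega)]
    · intro d
      rw [htr, hm2]
      simp only [List.count_append, List.count_singleton]
      rw [hc1 d, hc3 d]
      by_cases h1 : (d : ℕ) < m + 1
      · have hne : d ≠ ⟨m + 1, hmN⟩ := fun h => by rw [h] at h1; simp at h1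
        rw [if_pos h1, if_pos (by omega : (d : ℕ) < m + 2),
          if_neg (by simp; intro h; exact hne h.symm)]
        have : m + 2 - 1 - (d : ℕ) = (m + 1 - 1 - (d : ℕ)) + 1 := by omega
        rw [this, pow_succ]; ring
      · by_cases h2 : (d : ℕ) < m + 2
        · have he : d = ⟨m + 1, hmN⟩ := by ext; simp; omega
          subst he
          simp only [if_neg h1, if_pos h2]
          rw [if_pos (by simp), (by simp : m + 2 - 1 - ((⟨m + 1, hmN⟩ : Fin N) : ℕ) = 0)]
          simp
        · have hne : d ≠ ⟨m + 1, hmN⟩ := fun h => by rw [h] at h2; simp at h2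
          rw [if_neg h1, if_neg h2,
            if_neg (by simp [Fin.ext_iff]; omega)]

/-- when `hanoi N 0 2 1` is executed from the initial state (all
`N` discs on peg 1 = `0`), disc `d` (the `d`-th smallest, `1 ≤ d ≤ N`, i.e.
index `d - 1` in `Fin N`) is moved exactly `2 ^ (N - d)` times. -/
theorem hanoi_disc_move_count (N d : ℕ) (hd : 1 ≤ d) (hdN : d ≤ N) :
    List.count (some (⟨d - 1, by omega⟩ : Fin N))
      (trace (fun _ : Fin N => (0 : Fin 3)) (hanoi N 0 2 1)) = 2 ^ (N - d) := by
  obtain ⟨-, hc⟩ := hanoi_main N (le_refl N) (fun _ : Fin N => (0 : Fin 3)) 0 2 1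
    (by decide) (by decide) (by decide) (fun _ _ => rfl)
  rw [hc ⟨d - 1, by omega⟩]
  rw [if_pos (show ((⟨d - 1, by omega⟩ : Fin N) : ℕ) < N from by show d - 1 < N; omega)]
  have : ((⟨d - 1, by omega⟩ : Fin N) : ℕ) = d - 1 := rfl
  rw [this, (by omega : N - 1 - (d - 1) = N - d)]
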